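/- arXiv:2005.02185 — 9 statements merged into one kernel-verified Lean document; each statement's English description precedes it below -/
import Mathlib

section
/- For any tree T of order n with diameter at least 3, the total co-independent domination number of T is at most n minus the number of leaves of T. -/
open scoped Classical

/-- A set `D` is a total co-independent dominating set of `G`:
it is a total dominating set and its complement is a nonempty independent set. -/
def TotalCoIndep {V : Type*} [Fintype V] (G : SimpleGraph V) (D : Finset V) : Prop :=
  (∀ v : V, ∃ u ∈ D, G.Adj v u) ∧
  (Dᶜ : Finset V).Nonempty ∧
  ∀ u ∈ (Dᶜ : Finset V), ∀ w ∈ (Dᶜ : Finset V), ¬ G.Adj u w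

/-- The total co-independent domination number. -/
noncomputable def gammaTcoi {V : Type*} [Fintype V] (G : SimpleGraph V) : ℕ :=
  sInf {k | ∃ D : Finset V, TotalCoIndep G D ∧ D.card = k}

/-- A finite set of vertices is independent. -/
def IsIndepF {V : Type*} (G : SimpleGraph V) (B : Finset V) : Prop :=
  ∀ u ∈ B, ∀ w ∈ B, ¬ G.Adj u w

/-- The independence number. -/
noncomputable def indepNum {V : Type*} [Fintype V] (G : SimpleGraph V) : ℕ :=
  sSup {k | ∃ B : Finset V, IsIndepF G B ∧ B.card = k}

/-- A leaf: a vertex with exactly one neighbor (degree one). -/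
def IsLeaf {V : Type*} (G : SimpleGraph V) (v : V) : Prop :=
  ∃! u, G.Adj v u

/-- The set of leaves. -/
noncomputable def leaves {V : Type*} [Fintype V] (G : SimpleGraph V) : Finset V :=
  Finset.univ.filter (fun v => IsLeaf G v)

/-- A support vertex: a non-leaf adjacent to a leaf. -/
def IsSupport {V : Type*} (G : SimpleGraph V) (v : V) : Prop :=
  ¬ IsLeaf G v ∧ ∃ u, G.Adj v u ∧ IsLeaf G u

/-- A semi-support vertex: a non-leaf, non-support vertex adjacent to a support vertex. -/
def IsSemiSupport {V : Type*} (G : SimpleGraph V) (v : V) : Prop :=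
  ¬ IsLeaf G v ∧ ¬ IsSupport G v ∧ ∃ u, G.Adj v u ∧ IsSupport G u

/-- An isolated support vertex: a support vertex with no support vertex as neighbor. -/
def IsIsolatedSupport {V : Type*} (G : SimpleGraph V) (v : V) : Prop :=
  IsSupport G v ∧ ∀ u, G.Adj v u → ¬ IsSupport G u

/-- A vertex reachable to a different vertex has a neighbor. -/
lemma myAux_exists_adj {V : Type*} {G : SimpleGraph V} {u x : V}
    (h : G.Reachable u x) (hne : u ≠ x) : ∃ w, G.Adj u w := by
  obtain ⟨p⟩ := h
  cases p with
  | nil => exact absurd rfl hne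
  | cons h q => exact ⟨_, h⟩

/-- For any tree `T` of order `n` with diameter at least 3,
`γ_{t,coi}(T) ≤ n - |L(T)|`. -/
theorem stmt0 {V : Type*} [Fintype V] (T : SimpleGraph V) (hT : T.IsTree)
    (hdiam : ∃ x y : V, 3 ≤ T.dist x y) :
    gammaTcoi T ≤ Fintype.card V - (leaves T).card := by
  obtain ⟨x, y, hxy⟩ := hdiam
  have hconn := hT.isConnected
  -- no two adjacent leaves
  have nol : ∀ a b : V, IsLeaf T a → IsLeaf T b → ¬ T.Adj a b := by
    intro a b ha hb hab
    have ha' : ∀ w, T.Adj a w → w = b := by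
      intro w hw
      obtain ⟨u, -, hu⟩ := ha
      rw [hu w hw, hu b hab]
    have hb' : ∀ w, T.Adj b w → w = a := by
      intro w hw
      obtain ⟨u, -, hu⟩ := hb
      rw [hu w hw, hu a hab.symm]
    have hall : ∀ v : V, v = a ∨ v = b := by
      intro v
      obtain ⟨p, hp, -⟩ := hT.existsUnique_path a v
      cases p with
      | nil => exact Or.inl rfl
      | cons h q =>
        rename_i w
        have hw : w = b := ha' w h
        subst hw
        cases q with
        | nil => exact Or.inr rfl
        | cons h2 q2 =>
          rename_i w2
          have hw2 : w2 = a := hb' w2 h2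
          subst hw2
          rw [SimpleGraph.Walk.cons_isPath_iff] at hp
          exact absurd (by simp [SimpleGraph.Walk.support_cons]) hp.2
    have hd : T.dist x y ≤ 1 := by
      rcases hall x with hx | hx <;> rcases hall y with hy | hy <;> subst hx <;> subst hy
      · simp [SimpleGraph.dist_self]
      · exact le_of_eq (SimpleGraph.dist_eq_one_iff_adj.mpr hab)
      · exact le_of_eq (SimpleGraph.dist_eq_one_iff_adj.mpr hab.symm)
      · simp [SimpleGraph.dist_self]
    omega
  -- a vertex all of whose neighbors are leaves is within distance 1 of every vertex
  have hclaim : ∀ v : V, (∀ w, T.Adj v w → IsLeaf T w) → ∀ z : V, T.dist v z ≤ 1 := by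
    intro v hv z
    obtain ⟨p, hp, -⟩ := hT.existsUnique_path v z
    cases p with
    | nil => simp [SimpleGraph.dist_self]
    | cons h q =>
      rename_i w
      have hw : IsLeaf T w := hv w h
      have hw' : ∀ u, T.Adj w u → u = v := by
        intro u hu
        obtain ⟨c, -, hc⟩ := hw
        rw [hc u hu, hc v h.symm]
      cases q with
      | nil => exact SimpleGraph.dist_le (SimpleGraph.Walk.cons h SimpleGraph.Walk.nil)
      | cons h2 q2 =>
        rename_i w2
        have hw2 : w2 = v := hw' w2 h2
        subst hw2
        rw [SimpleGraph.Walk.cons_isPath_iff] at hp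
        exact absurd (by simp [SimpleGraph.Walk.support_cons]) hp.2
  -- existence of a leaf: the vertex farthest from x
  obtain ⟨u, -, hmax⟩ := Finset.exists_max_image Finset.univ (T.dist x) ⟨x, Finset.mem_univ x⟩
  have hdu : 3 ≤ T.dist x u := le_trans hxy (hmax y (Finset.mem_univ y))
  have hux : u ≠ x := by
    intro h; subst h; simp [SimpleGraph.dist_self] at hdu
  have huleaf : IsLeaf T u := by
    have key : ∀ a : V, T.Adj u a →
        ∃ r : T.Walk u x, r.IsPath ∧ r.getVert 1 = a := by
      intro a h
      obtain ⟨p, hp, hlen⟩ := (hconn x a).exists_path_of_dist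
      have hnot : u ∉ p.support := by
        intro hmem
        obtain ⟨q, r, hqr⟩ := SimpleGraph.Walk.mem_support_iff_exists_append.mp hmem
        have h1 : T.dist x u ≤ q.length := SimpleGraph.dist_le q
        have h2 : 1 ≤ r.length := by
          rcases Nat.eq_zero_or_pos r.length with h0 | h0
          · exact absurd (SimpleGraph.Walk.eq_of_length_eq_zero h0) h.ne
          · exact h0
        have h3 : q.length + r.length = T.dist x a := by
          rw [← hlen, hqr, SimpleGraph.Walk.length_append]
        have h4 : T.dist x a ≤ T.dist x u := hmax a (Finset.mem_univ a)
        omega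
      refine ⟨SimpleGraph.Walk.cons h p.reverse, ?_, ?_⟩
      · exact SimpleGraph.Walk.IsPath.cons hp.reverse (by
          simpa [SimpleGraph.Walk.support_reverse] using hnot)
      · simp [SimpleGraph.Walk.getVert_cons_succ]
    obtain ⟨w0, hw0⟩ := myAux_exists_adj (hconn u x) hux
    refine ⟨w0, hw0, ?_⟩
    intro a ha
    obtain ⟨r1, hr1, hg1⟩ := key a ha
    obtain ⟨r2, hr2, hg2⟩ := key w0 hw0
    have : r1 = r2 := (hT.existsUnique_path u x).unique hr1 hr2
    rw [← hg1, ← hg2, this]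
  -- the dominating set: all non-leaves
  set D : Finset V := (leaves T)ᶜ with hD
  have hmemD : ∀ w : V, w ∈ D ↔ ¬ IsLeaf T w := by
    intro w
    simp [hD, leaves, Finset.mem_compl, Finset.mem_filter]
  have hmemDc : ∀ w : V, w ∈ (Dᶜ : Finset V) ↔ IsLeaf T w := by
    intro w
    simp [hD, leaves, Finset.mem_filter]
  have hTCI : TotalCoIndep T D := by
    refine ⟨?_, ⟨u, (hmemDc u).mpr huleaf⟩, ?_⟩
    · intro v
      by_cases hv : IsLeaf T v
      · obtain ⟨w, hw, -⟩ := id hv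
        refine ⟨w, (hmemD w).mpr ?_, hw⟩
        intro hwleaf
        exact nol v w hv hwleaf hw
      · by_contra hcon
        push_neg at hcon
        have hall : ∀ w, T.Adj v w → IsLeaf T w := by
          intro w hw
          by_contra hwl
          exact hcon w ((hmemD w).mpr hwl) hw
        have h1 : T.dist v x ≤ 1 := hclaim v hall x
        have h2 : T.dist v y ≤ 1 := hclaim v hall y
        have h3 : T.dist x y ≤ T.dist x v + T.dist v y := hconn.dist_triangle
        rw [SimpleGraph.dist_comm] at h1
        omega
    · intro a ha b hb hab
      exact nol a b ((hmemDc a).mp ha) ((hmemDc b).mp hb) hab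
  have : (Fintype.card V - (leaves T).card) ∈
      {k | ∃ D : Finset V, TotalCoIndep T D ∧ D.card = k} :=
    ⟨D, hTCI, by simp [hD, Finset.card_compl]⟩
  exact Nat.sInf_le this
end

section
/- A total co-independent dominating set D of a graph G is minimal (no proper subset of D is a total co-independent dominating set) if and only if for each vertex v in D, either there exists a vertex u in V(G) with N(u) ∩ D = {v}, or there exists a vertex w in V(G)\D adjacent to v. -/
open scoped Classical

/-- A total co-independent dominating set `D` is minimal iff for each `v ∈ D`, either some
vertex `u` has `N(u) ∩ D = {v}`, or some vertex outside `D` is adjacent to `v`. -/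
theorem stmt3 {V : Type*} [Fintype V] (G : SimpleGraph V) (D : Finset V)
    (hD : TotalCoIndep G D) :
    (∀ D' : Finset V, D' ⊂ D → ¬ TotalCoIndep G D') ↔
      ∀ v ∈ D, (∃ u : V, Finset.univ.filter (fun x => G.Adj u x) ∩ D = {v}) ∨
        (∃ w : V, w ∉ D ∧ G.Adj v w) := by
  obtain ⟨hdom, hne, hind⟩ := hD
  constructor
  · intro hmin v hv
    by_contra hcon
    push_neg at hcon
    obtain ⟨h1, h2⟩ := hcon
    apply hmin (D.erase v) (Finset.erase_ssubset hv)
    refine ⟨?_, ?_, ?_⟩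
    · intro u
      obtain ⟨w, hwD, hadj⟩ := hdom u
      by_cases hall : ∀ x ∈ D, G.Adj u x → x = v
      · exfalso; apply h1 u
        ext x
        simp only [Finset.mem_inter, Finset.mem_filter, Finset.mem_univ, true_and,
          Finset.mem_singleton]
        constructor
        · rintro ⟨hax, hxD⟩; exact hall x hxD hax
        · rintro rfl
          have hwv := hall w hwD hadj
          exact ⟨hwv ▸ hadj, hv⟩
      · push_neg at hall
        obtain ⟨x, hxD, hax, hxv⟩ := hall
        exact ⟨x, Finset.mem_erase.2 ⟨hxv, hxD⟩, hax⟩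
    · obtain ⟨x, hx⟩ := hne
      exact ⟨x, Finset.mem_compl.2 (fun h => Finset.mem_compl.1 hx (Finset.erase_subset _ _ h))⟩
    · intro x hx y hy hadj
      have hx' := Finset.mem_compl.1 hx
      have hy' := Finset.mem_compl.1 hy
      rw [Finset.mem_erase, not_and_or, not_not] at hx' hy'
      rcases hx' with rfl | hx'
      · rcases hy' with rfl | hy'
        · exact G.irrefl hadj
        · exact h2 y hy' hadj
      · rcases hy' with rfl | hy'
        · exact h2 x hx' hadj.symm
        · exact hind x (Finset.mem_compl.2 hx') y (Finset.mem_compl.2 hy') hadj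
  · intro hcond D' hsub hD'
    obtain ⟨hdom', hne', hind'⟩ := hD'
    obtain ⟨v, hvD, hvD'⟩ := Finset.exists_of_ssubset hsub
    rcases hcond v hvD with ⟨u, hu⟩ | ⟨w, hwD, hadj⟩
    · obtain ⟨x, hxD', hax⟩ := hdom' u
      have hxD : x ∈ D := hsub.1 hxD'
      have hxv : x = v := Finset.mem_singleton.1 (hu ▸ Finset.mem_inter.2
        ⟨Finset.mem_filter.2 ⟨Finset.mem_univ x, hax⟩, hxD⟩)
      exact hvD' (hxv ▸ hxD')
    · have hwD' : w ∉ D' := fun h => hwD (hsub.1 h)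
      exact hind' v (Finset.mem_compl.2 hvD') w (Finset.mem_compl.2 hwD') hadj
end

section
/- Let T be a tree and B a maximum independent set of T of size at least 2. Then for every vertex v in B there exists a vertex u in B with u ≠ v and d(v,u) ≤ 3, where d denotes graph distance. -/
open scoped Classical

/-!
A maximum independent set `B` is dominating: a vertex outside `B` with no neighbour in `B`
could be added to it. Given a second vertex `w ∈ B`, either `d(v, w) ≤ 1`, or a shortest
`v`–`w` path has a vertex `b` with `d(v, b) = 2`; then `b` itself or a neighbour of `b` in `B`
lies in `B`, differs from `v` (as `b` is not adjacent to `v`) and is within distance 3 of `v`.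
-/

namespace SimpleGraph

variable {V : Type*} {G : SimpleGraph V}

theorem Connected.exists_dist_eq_two (hG : G.Connected) {v w : V} (h : 2 ≤ G.dist v w) :
    ∃ b, G.dist v b = 2 := by
  obtain ⟨p, hp⟩ := hG.exists_walk_length_eq_dist v w
  match p, hp with
  | .nil, _ => simp at h
  | .cons _ .nil, hp =>
    simp only [Walk.length_cons, Walk.length_nil] at hp
    omega
  | .cons hva (.cons (v := b) hab q), hp =>
    refine ⟨b, le_antisymm ?_ ?_⟩
    · simpa using dist_le (.cons hva (.cons hab .nil))
    · have hvw : G.dist v w ≤ G.dist v b + G.dist b w := hG.dist_triangle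
      have hbw : G.dist b w ≤ q.length := dist_le q
      simp only [Walk.length_cons] at hp
      omega

theorem Connected.exists_mem_ne_dist_le_three (hG : G.Connected) {B : Set V}
    (hdom : ∀ x ∉ B, ∃ b ∈ B, G.Adj x b) {v w : V} (hw : w ∈ B) (hwv : w ≠ v) :
    ∃ u ∈ B, u ≠ v ∧ G.dist v u ≤ 3 := by
  by_cases hvw : G.dist v w ≤ 1
  · exact ⟨w, hw, hwv, by omega⟩
  obtain ⟨b, hvb⟩ := hG.exists_dist_eq_two (v := v) (w := w) (by omega)
  have hbv : b ≠ v := by rintro rfl; simp at hvb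
  have hnadj : ¬ G.Adj v b := fun h => by simp [dist_eq_one_iff_adj.mpr h] at hvb
  by_cases hb : b ∈ B
  · exact ⟨b, hb, hbv, by omega⟩
  obtain ⟨c, hc, hbc⟩ := hdom b hb
  refine ⟨c, hc, fun hcv => hnadj (hcv ▸ hbc.symm), ?_⟩
  calc G.dist v c ≤ G.dist v b + G.dist b c := hG.dist_triangle
    _ = 3 := by rw [hvb, dist_eq_one_iff_adj.mpr hbc]

end SimpleGraph

section

variable {V : Type*} {G : SimpleGraph V}

theorem IsIndepF.insert {B : Finset V} {x : V} (hB : IsIndepF G B)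
    (hx : ∀ b ∈ B, ¬ G.Adj x b) : IsIndepF G (insert x B) := by
  intro a ha b hb
  rw [Finset.mem_insert] at ha hb
  rcases ha with rfl | ha <;> rcases hb with rfl | hb
  · exact G.irrefl
  · exact hx b hb
  · exact fun h => hx a ha h.symm
  · exact hB a ha b hb

theorem card_le_indepNum [Fintype V] {C : Finset V} (hC : IsIndepF G C) :
    C.card ≤ indepNum G :=
  le_csSup ⟨Fintype.card V, fun _ ⟨D, _, hD⟩ => hD ▸ D.card_le_univ⟩ ⟨C, hC, rfl⟩

theorem IsIndepF.exists_adj_mem_of_card_eq_indepNum [Fintype V] {B : Finset V}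
    (hB : IsIndepF G B) (hmax : B.card = indepNum G) {x : V} (hx : x ∉ B) :
    ∃ b ∈ B, G.Adj x b := by
  by_contra! hno
  have := card_le_indepNum (hB.insert hno)
  rw [Finset.card_insert_of_notMem hx] at this
  omega

end

/-- In a tree, every vertex of a maximum independent set `B` with `|B| ≥ 2` has another
vertex of `B` at distance at most 3. -/
theorem stmt4 {V : Type*} [Fintype V] (T : SimpleGraph V) (hT : T.IsTree)
    (B : Finset V) (hB : IsIndepF T B) (hBmax : B.card = indepNum T) (h2 : 2 ≤ B.card) :
    ∀ v ∈ B, ∃ u ∈ B, u ≠ v ∧ T.dist v u ≤ 3 := by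
  intro v _
  obtain ⟨w, hw, hwv⟩ : ∃ w ∈ B, w ≠ v := (B.one_lt_card_iff_nontrivial.mp h2).exists_ne v
  exact hT.connected.exists_mem_ne_dist_le_three (B := (B : Set V))
    (fun x hx => hB.exists_adj_mem_of_card_eq_indepNum hBmax hx) hw hwv
end

section
/- Let T be a tree with diameter at least 3 such that γ_{t,coi}(T) = |V(T)| - |L(T)| and such that T has at least one isolated support vertex. Then every semi-support vertex of T is adjacent to some isolated support vertex. -/
open scoped Classical

/-
If a semi-support vertex `v` had no isolated support neighbour, then deleting
`v` together with all the leaves would leave a total co-independent dominating set with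
`n - |L(T)| - 1` vertices. The removed vertices are independent because `v` is not a support
vertex and, as the diameter is at least 3, no two leaves are adjacent. Every vertex keeps a
neighbour among the remaining ones: `v` keeps its support neighbour, a leaf keeps its support,
and a non-leaf `w ≠ v` whose remaining neighbours were all removed would be an isolated support
vertex adjacent to `v`.
-/

section

variable {V : Type*} {G : SimpleGraph V}

lemma SimpleGraph.Reachable.of_adj_closed {S : V → Prop} (hS : ∀ p q, S p → G.Adj p q → S q)
    {u w : V} (hu : S u) (h : G.Reachable u w) : S w := by
  rw [SimpleGraph.reachable_iff_reflTransGen] at h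
  induction h with
  | refl => exact hu
  | tail _ hpq ih => exact hS _ _ ih hpq

lemma SimpleGraph.Connected.dist_le_two_of_closedNbhd_closed (hG : G.Connected) {w : V}
    (hw : ∀ p q, G.Adj w p → G.Adj p q → q = w ∨ G.Adj w q) (x y : V) : G.dist x y ≤ 2 := by
  have hnbhd : ∀ z, z = w ∨ G.Adj w z := fun z =>
    SimpleGraph.Reachable.of_adj_closed (S := fun z => z = w ∨ G.Adj w z)
      (by rintro p q (rfl | hp) hpq; exacts [Or.inr hpq, hw p q hp hpq]) (Or.inl rfl) (hG w z)
  have hle : ∀ z, G.dist w z ≤ 1 := fun z => by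
    rcases hnbhd z with rfl | hz
    · simp
    · exact (SimpleGraph.dist_eq_one_iff_adj.mpr hz).le
  calc G.dist x y ≤ G.dist x w + G.dist w y := hG.dist_triangle
    _ ≤ 2 := by rw [SimpleGraph.dist_comm (u := x)]; linarith [hle x, hle y]

lemma IsLeaf.eq_of_adj {u v w : V} (hu : IsLeaf G u) (hv : G.Adj u v) (hw : G.Adj u w) : w = v := by
  obtain ⟨_, _, huniq⟩ := hu
  rw [huniq w hw, huniq v hv]

lemma exists_adj_not_isLeaf (hG : G.Connected) {x y : V} (hxy : 3 ≤ G.dist x y) (w : V) :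
    ∃ z, G.Adj w z ∧ ¬ IsLeaf G z := by
  by_contra! hleaves
  have hclosed : ∀ p q, G.Adj w p → G.Adj p q → q = w ∨ G.Adj w q := fun p q hwp hpq =>
    Or.inl ((hleaves p hwp).eq_of_adj hwp.symm hpq)
  have := hG.dist_le_two_of_closedNbhd_closed hclosed x y
  omega

lemma not_adj_of_isLeaf (hG : G.Connected) {x y : V} (hxy : 3 ≤ G.dist x y) {a b : V}
    (ha : IsLeaf G a) (hb : IsLeaf G b) : ¬ G.Adj a b := fun hab => by
  obtain ⟨z, haz, hz⟩ := exists_adj_not_isLeaf hG hxy a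
  exact hz (ha.eq_of_adj hab haz ▸ hb)

lemma isIsolatedSupport_of_adj_of_forall_adj {v w : V} (hw : ¬ IsLeaf G w) (hwv : G.Adj w v)
    (hv : ¬ IsSupport G v) (hnbrs : ∀ z, G.Adj w z → z = v ∨ IsLeaf G z) :
    IsIsolatedSupport G w := by
  obtain ⟨z, hwz, hzv⟩ : ∃ z, G.Adj w z ∧ z ≠ v := by
    by_contra! h
    exact hw ⟨v, hwv, h⟩
  have hz : IsLeaf G z := (hnbrs z hwz).resolve_left hzv
  refine ⟨⟨hw, z, hwz, hz⟩, fun u hwu hu => ?_⟩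
  rcases hnbrs u hwu with rfl | hleaf
  exacts [hv hu, hu.1 hleaf]

lemma gammaTcoi_le_card [Fintype V] {D : Finset V} (hD : TotalCoIndep G D) :
    gammaTcoi G ≤ D.card :=
  Nat.sInf_le ⟨D, hD, rfl⟩

lemma totalCoIndep_compl_insert_leaves [Fintype V] (hG : G.Connected) {x y : V}
    (hxy : 3 ≤ G.dist x y) {v : V} (hv : IsSemiSupport G v)
    (hno : ¬ ∃ u, IsIsolatedSupport G u ∧ G.Adj v u) :
    TotalCoIndep G (insert v (leaves G))ᶜ := by
  obtain ⟨hvl, hvs, u, hvu, hu⟩ := hv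
  have hmem : ∀ z, z ∈ (insert v (leaves G))ᶜ ↔ z ≠ v ∧ ¬ IsLeaf G z := by
    simp [leaves]
  refine ⟨fun w => ?_, ⟨v, by simp⟩, ?_⟩
  · simp only [hmem]
    by_cases hwv : w = v
    · subst hwv
      exact ⟨u, ⟨(G.ne_of_adj hvu).symm, hu.1⟩, hvu⟩
    by_cases hwl : IsLeaf G w
    · obtain ⟨s, hws⟩ := hwl.exists
      have hs : ¬ IsLeaf G s := fun hs => not_adj_of_isLeaf hG hxy hwl hs hws
      refine ⟨s, ⟨?_, hs⟩, hws⟩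
      rintro rfl
      exact hvs ⟨hvl, w, hws.symm, hwl⟩
    by_contra! hnbrs
    have hnbrs' : ∀ z, G.Adj w z → z = v ∨ IsLeaf G z := fun z hwz => by
      by_contra! h
      exact hnbrs z h hwz
    obtain ⟨z, hwz, hz⟩ := exists_adj_not_isLeaf hG hxy w
    obtain rfl : z = v := (hnbrs' z hwz).resolve_right hz
    exact hno ⟨w, isIsolatedSupport_of_adj_of_forall_adj hwl hwz hvs hnbrs', hwz.symm⟩
  · simp only [compl_compl, Finset.mem_insert, leaves, Finset.mem_filter, Finset.mem_univ,
      true_and]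
    rintro a (rfl | ha) b (rfl | hb) hab
    · exact G.loopless.irrefl _ hab
    · exact hvs ⟨hvl, b, hab, hb⟩
    · exact hvs ⟨hvl, a, hab.symm, ha⟩
    · exact not_adj_of_isLeaf hG hxy ha hb hab

end

theorem stmt5_general {V : Type*} [Fintype V] (T : SimpleGraph V) (hT : T.IsTree)
    (hdiam : ∃ x y : V, 3 ≤ T.dist x y)
    (hval : gammaTcoi T = Fintype.card V - (leaves T).card) :
    ∀ v : V, IsSemiSupport T v → ∃ u : V, IsIsolatedSupport T u ∧ T.Adj v u := by
  intro v hv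
  by_contra hno
  obtain ⟨x, y, hxy⟩ := hdiam
  have hvL : v ∉ leaves T := by simp [leaves, hv.1]
  have hcard : (insert v (leaves T))ᶜ.card = Fintype.card V - ((leaves T).card + 1) := by
    rw [Finset.card_compl, Finset.card_insert_of_notMem hvL]
  have hLV : (leaves T).card < Fintype.card V :=
    Finset.card_lt_card (Finset.ssubset_univ_iff.mpr fun h => hvL (h ▸ Finset.mem_univ v))
  have := gammaTcoi_le_card (totalCoIndep_compl_insert_leaves hT.connected hxy hv hno)
  omega

/-- If `T` is a tree with diameter at least 3, `γ_{t,coi}(T) = n - |L(T)|`, and `T` has an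
isolated support vertex, then every semi-support vertex is adjacent to an isolated support. -/
theorem stmt5 {V : Type*} [Fintype V] (T : SimpleGraph V) (hT : T.IsTree)
    (hdiam : ∃ x y : V, 3 ≤ T.dist x y)
    (hval : gammaTcoi T = Fintype.card V - (leaves T).card)
    (hiso : ∃ v : V, IsIsolatedSupport T v) :
    ∀ v : V, IsSemiSupport T v → ∃ u : V, IsIsolatedSupport T u ∧ T.Adj v u :=
  stmt5_general T hT hdiam hval
end

section
/- Let T be a tree with diameter at least 3 such that γ_{t,coi}(T) = |V(T)| - |L(T)| and such that T has no isolated support vertex. Then every vertex of T is a leaf or a support vertex. -/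
open scoped Classical

section Helpers

variable {V : Type*} {G : SimpleGraph V}

lemma walk_closed {S : Set V} (hS : ∀ a ∈ S, ∀ b, G.Adj a b → b ∈ S)
    {c d : V} (p : G.Walk c d) : c ∈ S → d ∈ S := by
  induction p with
  | nil => exact id
  | cons h _ ih => exact fun hc => ih (hS _ hc _ h)

end Helpers

/-- If `T` is a tree with diameter at least 3, `γ_{t,coi}(T) = n - |L(T)|`, and `T` has no
isolated support vertex, then every vertex is a leaf or a support vertex. -/
theorem stmt6 {V : Type*} [Fintype V] (T : SimpleGraph V) (hT : T.IsTree)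
    (hdiam : ∃ x y : V, 3 ≤ T.dist x y)
    (hval : gammaTcoi T = Fintype.card V - (leaves T).card)
    (hiso : ∀ v : V, ¬ IsIsolatedSupport T v) :
    ∀ v : V, IsLeaf T v ∨ IsSupport T v := by
  obtain ⟨x, y, hxy⟩ := hdiam
  have hconn : T.Preconnected := hT.isConnected.preconnected
  have hxny : x ≠ y := by
    rintro rfl
    simp [SimpleGraph.dist_self] at hxy
  -- every vertex has a neighbor
  have step : ∀ v w : V, v ≠ w → ∃ z, T.Adj v z := by
    intro v w hvw
    obtain ⟨p⟩ := hconn v w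
    cases p with
    | nil => exact absurd rfl hvw
    | cons h _ => exact ⟨_, h⟩
  have hnbr : ∀ v : V, ∃ z, T.Adj v z := by
    intro v
    rcases eq_or_ne v x with rfl | hvx
    · exact step v y hxny
    · exact step v x hvx
  -- adjacent leaves are impossible
  have hLL : ∀ a b : V, IsLeaf T a → IsLeaf T b → ¬ T.Adj a b := by
    intro a b ha hb hab
    obtain ⟨wa, hwa, ha'⟩ := ha
    obtain ⟨wb, hwb, hb'⟩ := hb
    have hba : wa = b := (ha' b hab).symm
    have hbb : wb = a := (hb' a hab.symm).symm
    have hS : ∀ c ∈ ({a, b} : Set V), ∀ d, T.Adj c d → d ∈ ({a, b} : Set V) := by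
      rintro c (rfl | rfl) d hd
      · right; rw [← hba]; exact ha' d hd
      · left; rw [← hbb]; exact hb' d hd
    have hx : x ∈ ({a, b} : Set V) := by
      obtain ⟨p⟩ := hconn a x
      exact walk_closed hS p (Or.inl rfl)
    have hy : y ∈ ({a, b} : Set V) := by
      obtain ⟨p⟩ := hconn a y
      exact walk_closed hS p (Or.inl rfl)
    have hd1 : ∀ c d : V, c ∈ ({a, b} : Set V) → d ∈ ({a, b} : Set V) → T.dist c d ≤ 1 := by
      rintro c d (rfl | rfl) (rfl | rfl)
      · simp [SimpleGraph.dist_self]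
      · exact le_trans (SimpleGraph.dist_le (SimpleGraph.Walk.cons hab SimpleGraph.Walk.nil)) (by simp)
      · exact le_trans (SimpleGraph.dist_le (SimpleGraph.Walk.cons hab.symm SimpleGraph.Walk.nil)) (by simp)
      · simp [SimpleGraph.dist_self]
    have := hd1 x y hx hy
    omega
  -- every non-leaf has a non-leaf neighbor
  intro u
  by_contra hcon
  push_neg at hcon
  obtain ⟨huL, huS⟩ := hcon
  -- u is not a leaf and not a support; all neighbors of u are non-leaves
  have humem : u ∉ leaves T := by simp [leaves, huL]
  have hallnl : ∀ z, T.Adj u z → ¬ IsLeaf T z := by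
    intro z hz hzL
    exact huS ⟨huL, z, hz, hzL⟩
  -- the candidate set
  set D : Finset V := ((leaves T)ᶜ).erase u with hD
  have hmemD : ∀ w, w ∈ D ↔ (w ≠ u ∧ ¬ IsLeaf T w) := by
    intro w
    simp [hD, leaves, Finset.mem_erase]
  have hmemDc : ∀ w, w ∈ Dᶜ ↔ (w = u ∨ IsLeaf T w) := by
    intro w
    rw [Finset.mem_compl, hmemD]
    tauto
  have hTCI : TotalCoIndep T D := by
    refine ⟨?_, ⟨u, (hmemDc u).2 (Or.inl rfl)⟩, ?_⟩
    · intro v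
      rcases eq_or_ne v u with rfl | hvu
      · -- v = u : any neighbor of u works
        obtain ⟨z, hz⟩ := hnbr v
        exact ⟨z, (hmemD z).2 ⟨hz.ne', hallnl z hz⟩, hz⟩
      rcases Classical.em (IsLeaf T v) with hvL | hvL
      · -- v is a leaf: its neighbor is a support, hence non-leaf and ≠ u
        obtain ⟨s, hs, _⟩ := id hvL
        have hsnl : ¬ IsLeaf T s := fun hsl => hLL v s hvL hsl hs
        have hssupp : IsSupport T s := ⟨hsnl, v, hs.symm, hvL⟩
        exact ⟨s, (hmemD s).2 ⟨fun h => huS (h ▸ hssupp), hsnl⟩, hs⟩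
      rcases Classical.em (IsSupport T v) with hvS | hvS
      · -- v is a support: it has a support neighbor (not isolated)
        have := hiso v
        rw [IsIsolatedSupport] at this
        push_neg at this
        obtain ⟨z, hz, hzS⟩ := this hvS
        exact ⟨z, (hmemD z).2 ⟨fun h => huS (h ▸ hzS), hzS.1⟩, hz⟩
      · -- v non-leaf non-support: all neighbors non-leaf, and one differs from u
        have hvall : ∀ z, T.Adj v z → ¬ IsLeaf T z := by
          intro z hz hzL
          exact hvS ⟨hvL, z, hz, hzL⟩
        have : ∃ z, T.Adj v z ∧ z ≠ u := by
          by_contra hno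
          push_neg at hno
          obtain ⟨z, hz⟩ := hnbr v
          have hzu := hno z hz
          subst hzu
          exact hvL ⟨z, hz, fun y hy => (hno y hy).trans rfl⟩
        obtain ⟨z, hz, hzu⟩ := this
        exact ⟨z, (hmemD z).2 ⟨hzu, hvall z hz⟩, hz⟩
    · intro a ha b hb hab
      rw [hmemDc] at ha hb
      rcases ha with rfl | haL
      · rcases hb with rfl | hbL
        · exact T.irrefl hab
        · exact huS ⟨huL, b, hab, hbL⟩
      · rcases hb with rfl | hbL
        · exact huS ⟨huL, a, hab.symm, haL⟩
        · exact hLL a b haL hbL hab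
  have hcard : D.card = Fintype.card V - (leaves T).card - 1 := by
    rw [hD, Finset.card_erase_of_mem (by simpa using humem), Finset.card_compl]
  have hle : gammaTcoi T ≤ Fintype.card V - (leaves T).card - 1 :=
    Nat.sInf_le ⟨D, hTCI, hcard⟩
  have hlt : (leaves T).card < Fintype.card V := by
    have : leaves T ≠ Finset.univ := by
      intro h
      exact humem (h ▸ Finset.mem_univ u)
    exact (Finset.card_lt_iff_ne_univ _).mpr this
  omega
end

section
/- Let T' be a tree with diameter at least 3 satisfying γ_{t,coi}(T') = |V(T')| - β(T'), and let v be a vertex of T' belonging to some minimum total co-independent dominating set of T'. Let T be the tree obtained from T' by adding a new vertex u and the edge uv. Then γ_{t,coi}(T) = |V(T)| - β(T). -/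
open scoped Classical

/-!
The complement of a total co-independent dominating set is independent, so every such set has
at least `|V| - β` vertices and `γ_{t,coi} ≥ |V| - β` holds in every graph. A minimum set `D` of
`T'` containing `v` still works in `T`: `v` dominates `u`, and `u` joins the independent
complement. Since `|D| = |V(T')| - β(T')`, the complement of `D` is a maximum independent set of
`T'` avoiding `v`; adding `u` to it shows `β(T) = β(T') + 1`. Hence
`γ_{t,coi}(T) ≤ |D| = |V(T)| - β(T) ≤ γ_{t,coi}(T)`.
-/

section IndependenceNumber

variable {V : Type*} [Fintype V] {G : SimpleGraph V}

lemma IsIndepF.card_le_indepNum {B : Finset V} (hB : IsIndepF G B) : B.card ≤ indepNum G :=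
  le_csSup ⟨Fintype.card V, by rintro k ⟨B, -, rfl⟩; exact B.card_le_univ⟩ ⟨B, hB, rfl⟩

lemma indepNum_le_of_forall {k : ℕ} (h : ∀ B : Finset V, IsIndepF G B → B.card ≤ k) :
    indepNum G ≤ k :=
  csSup_le ⟨0, ∅, by simp [IsIndepF], rfl⟩ (by rintro _ ⟨B, hB, rfl⟩; exact h B hB)

variable (G) in
lemma indepNum_le_card : indepNum G ≤ Fintype.card V :=
  indepNum_le_of_forall fun B _ => B.card_le_univ

end IndependenceNumber

namespace TotalCoIndep

variable {V : Type*} [Fintype V] {G : SimpleGraph V} {D : Finset V}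

lemma gammaTcoi_le (hD : TotalCoIndep G D) : gammaTcoi G ≤ D.card :=
  Nat.sInf_le ⟨D, hD, rfl⟩

lemma card_compl_le_indepNum (hD : TotalCoIndep G D) : Dᶜ.card ≤ indepNum G :=
  IsIndepF.card_le_indepNum hD.2.2

lemma card_sub_indepNum_le_card (hD : TotalCoIndep G D) :
    Fintype.card V - indepNum G ≤ D.card := by
  have := hD.card_compl_le_indepNum
  rw [Finset.card_compl] at this
  omega

lemma card_sub_indepNum_le_gammaTcoi (hD : TotalCoIndep G D) :
    Fintype.card V - indepNum G ≤ gammaTcoi G := by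
  obtain ⟨D₀, hD₀, hcard⟩ : gammaTcoi G ∈ {k | ∃ D : Finset V, TotalCoIndep G D ∧ D.card = k} :=
    Nat.sInf_mem ⟨D.card, D, hD, rfl⟩
  exact hcard ▸ hD₀.card_sub_indepNum_le_card

end TotalCoIndep

/-- `H` is obtained from `G` by attaching a new vertex `none` to `v`. -/
def IsPendantExtension {V : Type*} (G : SimpleGraph V) (v : V) (H : SimpleGraph (Option V)) :
    Prop :=
  ∀ x y : Option V, H.Adj x y ↔
    (∃ a b : V, x = some a ∧ y = some b ∧ G.Adj a b) ∨
    (x = none ∧ y = some v) ∨ (x = some v ∧ y = none)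

namespace IsPendantExtension

variable {V : Type*} {G : SimpleGraph V} {v : V} {H : SimpleGraph (Option V)}

lemma adj_some_some (hH : IsPendantExtension G v H) {a b : V} :
    H.Adj (some a) (some b) ↔ G.Adj a b := by
  simp [hH _ _]

lemma adj_none_some (hH : IsPendantExtension G v H) {a : V} : H.Adj none (some a) ↔ a = v := by
  simp [hH _ _, eq_comm]

lemma isIndepF_insertNone (hH : IsPendantExtension G v H) {B : Finset V} (hB : IsIndepF G B)
    (hvB : v ∉ B) : IsIndepF H B.insertNone := by
  have hsymm : ∀ a ∈ B, ¬ H.Adj none (some a) := fun a ha h =>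
    hvB (hH.adj_none_some.1 h ▸ ha)
  rintro (_ | a) ha (_ | b) hb
  · exact H.irrefl
  · exact hsymm b (Finset.some_mem_insertNone.1 hb)
  · exact fun h => hsymm a (Finset.some_mem_insertNone.1 ha) h.symm
  · rw [hH.adj_some_some]
    exact hB a (Finset.some_mem_insertNone.1 ha) b (Finset.some_mem_insertNone.1 hb)

lemma isIndepF_eraseNone (hH : IsPendantExtension G v H) {B : Finset (Option V)}
    (hB : IsIndepF H B) : IsIndepF G B.eraseNone := fun _ ha _ hb hab =>
  hB _ (Finset.mem_eraseNone.1 ha) _ (Finset.mem_eraseNone.1 hb) (hH.adj_some_some.2 hab)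

variable [Fintype V]

lemma indepNum_le_succ (hH : IsPendantExtension G v H) : indepNum H ≤ indepNum G + 1 :=
  indepNum_le_of_forall fun B hB => by
    have := (hH.isIndepF_eraseNone hB).card_le_indepNum
    have := Finset.pred_card_le_card_erase (s := B) (a := none)
    rw [Finset.card_eraseNone_eq_card_erase] at *
    omega

lemma totalCoIndep_map_some (hH : IsPendantExtension G v H) {D : Finset V}
    (hD : TotalCoIndep G D) (hvD : v ∈ D) : TotalCoIndep H (D.map Function.Embedding.some) := by
  obtain ⟨hdom, -, hindep⟩ := hD
  refine ⟨?_, ⟨none, by simp⟩, ?_⟩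
  · rintro (_ | a)
    · exact ⟨some v, by simpa using hvD, hH.adj_none_some.2 rfl⟩
    · obtain ⟨b, hb, hab⟩ := hdom a
      exact ⟨some b, by simpa using hb, hH.adj_some_some.2 hab⟩
  · rintro (_ | a) ha (_ | b) hb
    · exact H.irrefl
    · rw [hH.adj_none_some]
      exact fun hbv => (by simpa using hb : b ∉ D) (hbv ▸ hvD)
    · rw [H.adj_comm, hH.adj_none_some]
      exact fun hav => (by simpa using ha : a ∉ D) (hav ▸ hvD)
    · rw [hH.adj_some_some]
      exact hindep a (by simpa using ha) b (by simpa using hb)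

end IsPendantExtension

theorem stmt8_general {V' : Type*} [Fintype V'] (T' : SimpleGraph V')
    (hval : gammaTcoi T' = Fintype.card V' - indepNum T')
    (v : V') (hv : ∃ D : Finset V', TotalCoIndep T' D ∧ D.card = gammaTcoi T' ∧ v ∈ D)
    (T : SimpleGraph (Option V'))
    (hT : ∀ x y : Option V', T.Adj x y ↔
      (∃ a b : V', x = some a ∧ y = some b ∧ T'.Adj a b) ∨
      (x = none ∧ y = some v) ∨ (x = some v ∧ y = none)) :
    gammaTcoi T = Fintype.card (Option V') - indepNum T := by
  obtain ⟨D, hD, hcard, hvD⟩ := hv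
  have hT : IsPendantExtension T' v T := hT
  have hDT := hT.totalCoIndep_map_some hD hvD
  have hindep : indepNum T = indepNum T' + 1 := by
    refine le_antisymm hT.indepNum_le_succ ?_
    have hmax : Dᶜ.card = indepNum T' := by
      have := indepNum_le_card T'
      rw [Finset.card_compl, hcard, hval]
      omega
    have hvB : v ∉ Dᶜ := Finset.notMem_compl.2 hvD
    simpa [hmax] using (hT.isIndepF_insertNone hD.2.2 hvB).card_le_indepNum
  refine le_antisymm ?_ hDT.card_sub_indepNum_le_gammaTcoi
  calc gammaTcoi T ≤ (D.map Function.Embedding.some).card := hDT.gammaTcoi_le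
    _ = Fintype.card (Option V') - indepNum T := by
      rw [Finset.card_map, hcard, hval, hindep, Fintype.card_option]
      omega

/-- Operation O₁: attaching a pendant vertex to a vertex of some minimum total
co-independent dominating set preserves `γ_{t,coi} = n - β`. -/
theorem stmt8 {V' : Type*} [Fintype V'] (T' : SimpleGraph V') (hT' : T'.IsTree)
    (hdiam : ∃ x y : V', 3 ≤ T'.dist x y)
    (hval : gammaTcoi T' = Fintype.card V' - indepNum T')
    (v : V') (hv : ∃ D : Finset V', TotalCoIndep T' D ∧ D.card = gammaTcoi T' ∧ v ∈ D)
    (T : SimpleGraph (Option V'))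
    (hT : ∀ x y : Option V', T.Adj x y ↔
      (∃ a b : V', x = some a ∧ y = some b ∧ T'.Adj a b) ∨
      (x = none ∧ y = some v) ∨ (x = some v ∧ y = none)) :
    gammaTcoi T = Fintype.card (Option V') - indepNum T :=
  stmt8_general T' hval v hv T hT
end

section
/- Let T' be a tree with diameter at least 3 satisfying γ_{t,coi}(T') = |V(T')| - β(T'), and let v be a vertex of T' belonging to some maximum independent set of T'. Let T be obtained from T' by adding a path h₁u₁u₂h₂ on four new vertices and the edge vu₁. Then γ_{t,coi}(T) = |V(T)| - β(T). -/
open scoped Classical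

lemma indepF_empty {V : Type*} (G : SimpleGraph V) : IsIndepF G (∅ : Finset V) := by
  intro u hu; simp at hu

lemma aux_fin4 : ∀ s : Finset (Fin 4), ¬((0:Fin 4) ∈ s ∧ (1:Fin 4) ∈ s) →
    ¬((1:Fin 4) ∈ s ∧ (2:Fin 4) ∈ s) → ¬((2:Fin 4) ∈ s ∧ (3:Fin 4) ∈ s) → s.card ≤ 2 := by
  decide

lemma indep_card_le {V : Type*} [Fintype V] (G : SimpleGraph V) (B : Finset V)
    (hB : IsIndepF G B) : B.card ≤ indepNum G := by
  apply le_csSup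
  · exact ⟨Fintype.card V, by rintro k ⟨B, _, rfl⟩; exact Finset.card_le_univ B⟩
  · exact ⟨B, hB, rfl⟩

lemma gamma_ge {V : Type*} [Fintype V] (G : SimpleGraph V) (D : Finset V)
    (hD : TotalCoIndep G D) : Fintype.card V - indepNum G ≤ D.card := by
  have h1 : (Dᶜ : Finset V).card ≤ indepNum G := indep_card_le G _ hD.2.2
  have h2 : (Dᶜ : Finset V).card = Fintype.card V - D.card := Finset.card_compl D
  have h3 : D.card ≤ Fintype.card V := Finset.card_le_univ D
  omega

set_option maxHeartbeats 1000000 in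
/-- Operation O₄: attaching a path `h₁u₁u₂h₂` by joining a vertex `v` of some maximum
independent set to the support `u₁` preserves `γ_{t,coi} = n - β`.
Here `h₁,u₁,u₂,h₂` are `Sum.inr 0, 1, 2, 3`. -/
theorem stmt11 {V' : Type*} [Fintype V'] (T' : SimpleGraph V') (hT' : T'.IsTree)
    (hdiam : ∃ x y : V', 3 ≤ T'.dist x y)
    (hval : gammaTcoi T' = Fintype.card V' - indepNum T')
    (v : V') (hv : ∃ B : Finset V', IsIndepF T' B ∧ B.card = indepNum T' ∧ v ∈ B)
    (T : SimpleGraph (V' ⊕ Fin 4))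
    (hT : ∀ x y : V' ⊕ Fin 4, T.Adj x y ↔
      (∃ a b : V', x = Sum.inl a ∧ y = Sum.inl b ∧ T'.Adj a b) ∨
      (x = Sum.inl v ∧ y = Sum.inr 1) ∨ (x = Sum.inr 1 ∧ y = Sum.inl v) ∨
      (x = Sum.inr 0 ∧ y = Sum.inr 1) ∨ (x = Sum.inr 1 ∧ y = Sum.inr 0) ∨
      (x = Sum.inr 1 ∧ y = Sum.inr 2) ∨ (x = Sum.inr 2 ∧ y = Sum.inr 1) ∨
      (x = Sum.inr 2 ∧ y = Sum.inr 3) ∨ (x = Sum.inr 3 ∧ y = Sum.inr 2)) :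
    gammaTcoi T = Fintype.card (V' ⊕ Fin 4) - indepNum T := by
  classical
  obtain ⟨B, hBind, hBcard, hvB⟩ := hv
  -- an edge of T'
  obtain ⟨x, y, hxy⟩ := hdiam
  have hxney : x ≠ y := by
    intro h; subst h; simp [SimpleGraph.dist_self] at hxy
  obtain ⟨p⟩ : T'.Reachable x y := hT'.isConnected.preconnected x y
  have hedge : ∃ a b : V', T'.Adj a b := by
    cases p with
    | nil => exact absurd rfl hxney
    | cons h q => exact ⟨_, _, h⟩
  obtain ⟨a₀, b₀, hab⟩ := hedge
  -- indepNum T' < card V'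
  have hβlt : indepNum T' < Fintype.card V' := by
    have h1 : 1 ≤ Fintype.card V' := Fintype.card_pos_iff.mpr ⟨a₀⟩
    have h2 : indepNum T' ≤ Fintype.card V' - 1 := by
      unfold indepNum
      refine csSup_le ⟨0, ∅, indepF_empty T', rfl⟩ ?_
      rintro k ⟨C, hC, rfl⟩
      have hne : C ≠ Finset.univ := by
        intro h
        exact hC a₀ (h ▸ Finset.mem_univ a₀) b₀ (h ▸ Finset.mem_univ b₀) hab
      have := Finset.card_lt_card (Finset.ssubset_univ_iff.mpr hne)
      simp only [Finset.card_univ] at this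
      omega
    omega
  -- adjacency characterization for inl-inl
  have hAdjInl : ∀ a b : V', T.Adj (Sum.inl a) (Sum.inl b) ↔ T'.Adj a b := by
    intro a b
    rw [hT]
    constructor
    · rintro (⟨a', b', ha, hb, h⟩ | h | h | h | h | h | h | h | h) <;> simp_all
    · intro h; exact Or.inl ⟨a, b, rfl, rfl, h⟩
  have hadj01 : T.Adj (Sum.inr 0) (Sum.inr 1) :=
    (hT _ _).mpr (Or.inr (Or.inr (Or.inr (Or.inl ⟨rfl, rfl⟩))))
  have hadj12 : T.Adj (Sum.inr 1) (Sum.inr 2) :=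
    (hT _ _).mpr (Or.inr (Or.inr (Or.inr (Or.inr (Or.inr (Or.inl ⟨rfl, rfl⟩))))))
  have hadj23 : T.Adj (Sum.inr 2) (Sum.inr 3) :=
    (hT _ _).mpr (Or.inr (Or.inr (Or.inr (Or.inr (Or.inr (Or.inr (Or.inr (Or.inl ⟨rfl, rfl⟩))))))))
  -- indepNum T = indepNum T' + 2
  have hβT : indepNum T = indepNum T' + 2 := by
    have hub : ∀ C : Finset (V' ⊕ Fin 4), IsIndepF T C → C.card ≤ indepNum T' + 2 := by
      intro C hC
      set A : Finset V' := C.preimage Sum.inl Sum.inl_injective.injOn with hA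
      have hAind : IsIndepF T' A := by
        intro a ha b hb h
        rw [hA, Finset.mem_preimage] at ha hb
        exact hC _ ha _ hb ((hAdjInl a b).mpr h)
      set s : Finset (Fin 4) := Finset.univ.filter (fun i => Sum.inr i ∈ C) with hs
      have hsplit : C ⊆ A.image Sum.inl ∪ s.image Sum.inr := by
        intro z hz
        rcases z with a | i
        · exact Finset.mem_union_left _
            (Finset.mem_image_of_mem _ (Finset.mem_preimage.mpr hz))
        · exact Finset.mem_union_right _
            (Finset.mem_image_of_mem _ (by simp [hs, hz]))
      have hcard : C.card ≤ A.card + s.card := by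
        calc C.card ≤ (A.image Sum.inl ∪ s.image Sum.inr).card := Finset.card_le_card hsplit
        _ ≤ (A.image Sum.inl).card + (s.image Sum.inr).card := Finset.card_union_le _ _
        _ = A.card + s.card := by
            rw [Finset.card_image_of_injective _ Sum.inl_injective,
              Finset.card_image_of_injective _ Sum.inr_injective]
      have h01 : ¬ ((0:Fin 4) ∈ s ∧ (1:Fin 4) ∈ s) := by
        rintro ⟨h0, h1⟩
        rw [hs, Finset.mem_filter] at h0 h1
        exact hC _ h0.2 _ h1.2 hadj01
      have h12 : ¬ ((1:Fin 4) ∈ s ∧ (2:Fin 4) ∈ s) := by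
        rintro ⟨h0, h1⟩
        rw [hs, Finset.mem_filter] at h0 h1
        exact hC _ h0.2 _ h1.2 hadj12
      have h23 : ¬ ((2:Fin 4) ∈ s ∧ (3:Fin 4) ∈ s) := by
        rintro ⟨h0, h1⟩
        rw [hs, Finset.mem_filter] at h0 h1
        exact hC _ h0.2 _ h1.2 hadj23
      have hs2 : s.card ≤ 2 := aux_fin4 s h01 h12 h23
      have := indep_card_le T' A hAind
      omega
    have hle : indepNum T ≤ indepNum T' + 2 := by
      unfold indepNum
      refine csSup_le ⟨0, ∅, indepF_empty T, rfl⟩ ?_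
      rintro k ⟨C, hC, rfl⟩
      exact hub C hC
    have hge : indepNum T' + 2 ≤ indepNum T := by
      set BB : Finset (V' ⊕ Fin 4) := B.image Sum.inl ∪ {Sum.inr 0, Sum.inr 3} with hBB
      have hmem : ∀ z : V' ⊕ Fin 4, z ∈ BB →
          (∃ a ∈ B, z = Sum.inl a) ∨ z = Sum.inr 0 ∨ z = Sum.inr 3 := by
        intro z hz
        rw [hBB, Finset.mem_union, Finset.mem_image] at hz
        rcases hz with ⟨a, ha, rfl⟩ | hz
        · exact Or.inl ⟨a, ha, rfl⟩
        · simp only [Finset.mem_insert, Finset.mem_singleton] at hz; tauto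
      have hBBind : IsIndepF T BB := by
        intro u hu w hw hadj
        rw [hT] at hadj
        have hu' := hmem u hu
        have hw' := hmem w hw
        rcases hadj with ⟨a, b, rfl, rfl, h⟩ | ⟨h1, h2⟩ | ⟨h1, h2⟩ | ⟨h1, h2⟩ | ⟨h1, h2⟩
          | ⟨h1, h2⟩ | ⟨h1, h2⟩ | ⟨h1, h2⟩ | ⟨h1, h2⟩
        · rcases hu' with ⟨a', ha', he⟩ | he | he <;> rcases hw' with ⟨b', hb', he'⟩ | he' | he' <;>
            simp_all
          exact hBind _ ha' _ hb' h
        all_goals (subst h1; subst h2; simp_all)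
      have hcard2 : BB.card = B.card + 2 := by
        rw [hBB, Finset.card_union_of_disjoint, Finset.card_image_of_injective _ Sum.inl_injective]
        · simp
        · simp [Finset.disjoint_left]
      have := indep_card_le T BB hBBind
      omega
    omega
  -- get an optimal TCI set of T'
  have hne' : {k | ∃ D : Finset V', TotalCoIndep T' D ∧ D.card = k}.Nonempty := by
    by_contra h
    rw [Set.not_nonempty_iff_eq_empty] at h
    have : gammaTcoi T' = 0 := by rw [gammaTcoi, h, Nat.sInf_empty]
    omega
  obtain ⟨D', hD', hDcard⟩ := Nat.sInf_mem hne'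
  -- the witness for T
  set D : Finset (V' ⊕ Fin 4) := D'.image Sum.inl ∪ {Sum.inr 1, Sum.inr 2} with hD
  have hinr1 : Sum.inr 1 ∈ D := by simp [hD]
  have hinr2 : Sum.inr 2 ∈ D := by simp [hD]
  have hDtci : TotalCoIndep T D := by
    refine ⟨?_, ?_, ?_⟩
    · rintro (a | i)
      · obtain ⟨u, hu, hadj⟩ := hD'.1 a
        exact ⟨Sum.inl u, by simp [hD, Finset.mem_image_of_mem _ hu],
          (hAdjInl a u).mpr hadj⟩
      · fin_cases i
        · exact ⟨Sum.inr 1, hinr1, hadj01⟩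
        · exact ⟨Sum.inr 2, hinr2, hadj12⟩
        · exact ⟨Sum.inr 1, hinr1, hadj12.symm⟩
        · exact ⟨Sum.inr 2, hinr2, hadj23.symm⟩
    · refine ⟨Sum.inr 0, ?_⟩
      simp only [Finset.mem_compl]
      simp [hD]
    · intro u hu w hw hadj
      simp only [Finset.mem_compl] at hu hw
      rw [hT] at hadj
      rcases hadj with ⟨a, b, rfl, rfl, h⟩ | ⟨h1, h2⟩ | ⟨h1, h2⟩ | ⟨h1, h2⟩ | ⟨h1, h2⟩
        | ⟨h1, h2⟩ | ⟨h1, h2⟩ | ⟨h1, h2⟩ | ⟨h1, h2⟩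
      · have ha : a ∉ D' := by
          intro hmem; exact hu (by simp [hD, Finset.mem_image_of_mem _ hmem])
        have hb : b ∉ D' := by
          intro hmem; exact hw (by simp [hD, Finset.mem_image_of_mem _ hmem])
        refine hD'.2.2 a ?_ b ?_ h <;> simp only [Finset.mem_compl] <;> assumption
      all_goals subst h1
      all_goals subst h2
      all_goals first | exact hu hinr1 | exact hw hinr1 | exact hu hinr2 | exact hw hinr2
  have hDcard2 : D.card = D'.card + 2 := by
    rw [hD, Finset.card_union_of_disjoint, Finset.card_image_of_injective _ Sum.inl_injective]
    · simp
    · simp [Finset.disjoint_left]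
  -- upper bound
  have hub : gammaTcoi T ≤ D.card := by
    unfold gammaTcoi
    exact Nat.sInf_le ⟨D, hDtci, rfl⟩
  -- lower bound
  have hneT : {k | ∃ E : Finset (V' ⊕ Fin 4), TotalCoIndep T E ∧ E.card = k}.Nonempty :=
    ⟨D.card, D, hDtci, rfl⟩
  obtain ⟨D₀, hD₀, hD₀card⟩ := Nat.sInf_mem hneT
  have hD₀c : D₀.card = gammaTcoi T := hD₀card
  have hlb : Fintype.card (V' ⊕ Fin 4) - indepNum T ≤ gammaTcoi T := by
    rw [← hD₀c]; exact gamma_ge T D₀ hD₀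
  have hDc : D'.card = Fintype.card V' - indepNum T' := by
    have h : D'.card = gammaTcoi T' := hDcard
    rw [h, hval]
  have hcardsum : Fintype.card (V' ⊕ Fin 4) = Fintype.card V' + 4 := by
    simp [Fintype.card_sum]
  omega
end

section
/- Let T be a tree with diameter at least 3 in which every vertex is either a leaf or a support vertex. Then the set S(T) of support vertices is a total co-independent dominating set of T and the set L(T) of leaves is a maximum independent set of T; consequently γ_{t,coi}(T) = |S(T)| = |V(T)| - β(T). -/
open scoped Classical

/-- Along a walk, a property preserved by adjacency propagates. -/
lemma walk_confined {V : Type*} (T : SimpleGraph V) (P : V → Prop)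
    (hstep : ∀ a b, P a → T.Adj a b → P b) :
    ∀ {a w : V} (_ : T.Walk a w), P a → P w := by
  intro a w p
  induction p with
  | nil => exact id
  | cons h q ih => exact fun ha => ih (hstep _ _ ha h)

lemma conn_prop {V : Type*} {T : SimpleGraph V} (hc : T.Connected) (P : V → Prop)
    (hstep : ∀ a b, P a → T.Adj a b → P b) {a : V} (ha : P a) : ∀ w, P w := by
  intro w
  exact (hc.preconnected a w).elim fun p => walk_confined T P hstep p ha

/-- If every vertex of a tree `T` with diameter at least 3 is a leaf or a support vertex,
then the support vertices form a total co-independent dominating set, the leaves form a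
maximum independent set, and `γ_{t,coi}(T) = |S(T)| = n - β(T)`. -/
theorem stmt16 {V : Type*} [Fintype V] (T : SimpleGraph V) (hT : T.IsTree)
    (hdiam : ∃ x y : V, 3 ≤ T.dist x y)
    (hls : ∀ v : V, IsLeaf T v ∨ IsSupport T v) :
    TotalCoIndep T (Finset.univ.filter (fun v => IsSupport T v)) ∧
      IsIndepF T (leaves T) ∧ (leaves T).card = indepNum T ∧
      gammaTcoi T = (Finset.univ.filter (fun v => IsSupport T v)).card ∧
      gammaTcoi T = Fintype.card V - indepNum T := by
  classical
  obtain ⟨x, y, hxy⟩ := hdiam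
  have hc := hT.isConnected
  set S : Finset V := Finset.univ.filter (fun v => IsSupport T v) with hS
  -- no two leaves are adjacent
  have hno2leaf : ∀ u v, IsLeaf T u → IsLeaf T v → ¬ T.Adj u v := by
    intro u v hu hv hadj
    have hall : ∀ w, w = u ∨ w = v := by
      refine conn_prop hc (fun z => z = u ∨ z = v) ?_ (Or.inl rfl)
      rintro a b (rfl | rfl) hab
      · right; exact hu.unique hab hadj
      · left; exact hv.unique hab hadj.symm
    have hd : T.dist x y ≤ 1 := by
      rcases eq_or_ne x y with rfl | hne
      · simp [SimpleGraph.dist_self]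
      · have hadj' : T.Adj x y := by
          rcases hall x with rfl | rfl <;> rcases hall y with rfl | rfl
          · exact absurd rfl hne
          · exact hadj
          · exact hadj.symm
          · exact absurd rfl hne
        have := SimpleGraph.dist_le (SimpleGraph.Walk.cons hadj' SimpleGraph.Walk.nil)
        simpa using this
    omega
  -- every leaf's unique neighbor is a support vertex
  have hleaf_nb : ∀ v, IsLeaf T v → ∃ s, T.Adj v s ∧ IsSupport T s := by
    intro v hv
    obtain ⟨s, hs, _⟩ := id hv
    refine ⟨s, hs, ?_⟩
    rcases hls s with hsl | hss
    · exact absurd hs (hno2leaf v s hv hsl)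
    · exact hss
  -- every support vertex has a support neighbor
  have hsupp_nb : ∀ v, IsSupport T v → ∃ s, T.Adj v s ∧ IsSupport T s := by
    intro v hv
    by_contra hcon
    push_neg at hcon
    -- all neighbors of v are leaves
    have hnbleaf : ∀ b, T.Adj v b → IsLeaf T b := by
      intro b hb
      rcases hls b with h | h
      · exact h
      · exact absurd h (hcon b hb)
    have hall : ∀ w, w = v ∨ T.Adj v w := by
      refine conn_prop hc (fun z => z = v ∨ T.Adj v z) ?_ (Or.inl rfl)
      rintro a b (rfl | ha) hab
      · right; exact hab
      · left
        have hl := hnbleaf a ha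
        have h1 : b = v ∨ b = v := by
          have := hl.unique hab ha.symm
          exact Or.inl this
        rcases h1 with h | h <;> exact h
    have hdle : ∀ p q : V, T.dist p q ≤ 2 := by
      intro p q
      have hp := hall p
      have hq := hall q
      rcases eq_or_ne p q with rfl | hne
      · simp [SimpleGraph.dist_self]
      rcases hp with rfl | hp
      · rcases hq with rfl | hq
        · exact absurd rfl hne
        · have := SimpleGraph.dist_le (SimpleGraph.Walk.cons hq SimpleGraph.Walk.nil)
          simp at this; omega
      · rcases hq with rfl | hq
        · have := SimpleGraph.dist_le (SimpleGraph.Walk.cons hp.symm SimpleGraph.Walk.nil)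
          simp at this; omega
        · have := SimpleGraph.dist_le
            (SimpleGraph.Walk.cons hp.symm (SimpleGraph.Walk.cons hq SimpleGraph.Walk.nil))
          simp at this; omega
    have := hdle x y; omega
  -- total domination by S
  have htot : ∀ v : V, ∃ u ∈ S, T.Adj v u := by
    intro v
    rcases hls v with hv | hv
    · obtain ⟨s, hs1, hs2⟩ := hleaf_nb v hv
      exact ⟨s, by simp [hS, hs2], hs1⟩
    · obtain ⟨s, hs1, hs2⟩ := hsupp_nb v hv
      exact ⟨s, by simp [hS, hs2], hs1⟩
  -- complement of S is exactly the leaves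
  have hScompl : (Sᶜ : Finset V) = leaves T := by
    ext v
    simp only [Finset.mem_compl, hS, Finset.mem_filter, Finset.mem_univ, true_and, leaves]
    constructor
    · intro h; exact (hls v).resolve_right h
    · intro h; exact fun hsup => hsup.1 h
  -- there is a leaf
  have hleaf_ex : (leaves T).Nonempty := by
    rcases hls x with h | h
    · exact ⟨x, by simp [leaves, h]⟩
    · obtain ⟨u, _, hu⟩ := h.2
      exact ⟨u, by simp [leaves, hu]⟩
  -- leaves are independent
  have hindep : IsIndepF T (leaves T) := by
    intro u hu w hw hadj
    simp only [leaves, Finset.mem_filter] at hu hw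
    exact hno2leaf u w hu.2 hw.2 hadj
  have hTCI : TotalCoIndep T S := by
    refine ⟨htot, ?_, ?_⟩
    · rw [hScompl]; exact hleaf_ex
    · rw [hScompl]; exact hindep
  -- every independent set has card ≤ card of leaves
  have hmax : ∀ B : Finset V, IsIndepF T B → B.card ≤ (leaves T).card := by
    intro B hB
    classical
    set f : V → V := fun v => if h : IsSupport T v then h.2.choose else v with hf
    have hfleaf : ∀ v, f v ∈ leaves T ∨ (¬ IsSupport T v ∧ f v = v) := by
      intro v
      by_cases h : IsSupport T v
      · left
        have := h.2.choose_spec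
        simp [hf, h, leaves, this.2]
      · right; exact ⟨h, by simp [hf, h]⟩
    have hfadj : ∀ v, IsSupport T v → T.Adj v (f v) ∧ IsLeaf T (f v) := by
      intro v h
      have := h.2.choose_spec
      simpa [hf, h] using this
    refine Finset.card_le_card_of_injOn f ?_ ?_
    · intro v hv
      by_cases h : IsSupport T v
      · simp [leaves, (hfadj v h).2]
      · have : IsLeaf T v := (hls v).resolve_right h
        simp [hf, h, leaves, this]
    · intro v hv w hw hvw
      by_cases h1 : IsSupport T v <;> by_cases h2 : IsSupport T w
      · -- both supports: f v = f w is a leaf adjacent to both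
        obtain ⟨ha1, hl1⟩ := hfadj v h1
        obtain ⟨ha2, _⟩ := hfadj w h2
        have := hl1.unique ha1.symm (hvw ▸ ha2.symm)
        exact this
      · -- v support, w not: f w = w, so w = f v adjacent to v, both in B
        have hw' : f w = w := by simp [hf, h2]
        obtain ⟨ha1, _⟩ := hfadj v h1
        have : T.Adj v w := by rw [← hw', ← hvw]; exact ha1
        exact absurd this (hB v hv w hw)
      · have hv' : f v = v := by simp [hf, h1]
        obtain ⟨ha2, _⟩ := hfadj w h2
        have : T.Adj w v := by rw [← hv', hvw]; exact ha2
        exact absurd this.symm (hB v hv w hw)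
      · simpa [hf, h1, h2] using hvw
  -- independence number = card leaves
  have hind_num : (leaves T).card = indepNum T := by
    have hmem : (leaves T).card ∈ {k | ∃ B : Finset V, IsIndepF T B ∧ B.card = k} :=
      ⟨leaves T, hindep, rfl⟩
    have hub : ∀ k ∈ {k | ∃ B : Finset V, IsIndepF T B ∧ B.card = k},
        k ≤ (leaves T).card := by
      rintro k ⟨B, hB, rfl⟩; exact hmax B hB
    exact le_antisymm (le_csSup ⟨(leaves T).card, hub⟩ hmem) (csSup_le ⟨_, hmem⟩ hub)
  -- every TCI set contains all supports
  have hsub : ∀ D : Finset V, TotalCoIndep T D → S ⊆ D := by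
    intro D hD v hv
    simp only [hS, Finset.mem_filter] at hv
    obtain ⟨u, hvu, hu⟩ := hv.2.2
    obtain ⟨w, hwD, hw⟩ := hD.1 u
    have : w = v := hu.unique hw hvu.symm
    exact this ▸ hwD
  have hgamma : gammaTcoi T = S.card := by
    have hmem : S.card ∈ {k | ∃ D : Finset V, TotalCoIndep T D ∧ D.card = k} :=
      ⟨S, hTCI, rfl⟩
    have hlb : ∀ k ∈ {k | ∃ D : Finset V, TotalCoIndep T D ∧ D.card = k},
        S.card ≤ k := by
      rintro k ⟨D, hD, rfl⟩; exact Finset.card_le_card (hsub D hD)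
    exact le_antisymm (Nat.sInf_le hmem) (le_csInf ⟨_, hmem⟩ hlb)
  have hcard : S.card = Fintype.card V - (leaves T).card := by
    have : S = (leaves T)ᶜ := by
      rw [← hScompl]; simp
    rw [this, Finset.card_compl]
  exact ⟨hTCI, hindep, hind_num, hgamma, by rw [hgamma, hcard, hind_num]⟩
end

section
/- For every pair of positive integers b and d, there exists a tree T with diameter at least 3 such that γ_{t,coi}(T) - (|V(T)| - β(T)) = b and (|V(T)| - |L(T)|) - γ_{t,coi}(T) = d. -/
open scoped Classical

/-!
The witness for `b = p + 1`, `d = q + 1` is a tree with `3p + 5q + 12` vertices and `p + 2q + 5`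
leaves: a centre with `p + 2` pendant paths `X - S - L` and a chain of `q + 1` gadgets. Any total
co-independent dominating set contains every support vertex `S, P, Q` and, as `S` must be
dominated, one of `X, L` on each path; all of `X, S, P, Q` is such a set, so
`γ_{t,coi} = 2p + 2q + 6`. The vertices `X, L, E, F, U` form an independent set that is maximum
because the tree is covered by equally many cliques (edges and single vertices), so
`β = 2p + 3q + 7`.
-/

open Finset

section Invariance

variable {V W : Type*} {G : SimpleGraph V} {H : SimpleGraph W}

lemma SimpleGraph.Iso.dist_le (e : G ≃g H) (u v : V) : H.dist (e u) (e v) ≤ G.dist u v := by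
  by_cases h : G.Reachable u v
  · obtain ⟨w, hw⟩ := h.exists_walk_length_eq_dist
    simpa [hw] using SimpleGraph.dist_le (w.map e.toHom)
  · have h' : ¬ H.Reachable (e u) (e v) := fun h' => h (by simpa using h'.map e.symm.toHom)
    simp [SimpleGraph.dist_eq_zero_of_not_reachable h']

lemma SimpleGraph.Iso.dist_eq (e : G ≃g H) (u v : V) : H.dist (e u) (e v) = G.dist u v :=
  (e.dist_le u v).antisymm (by simpa using e.symm.dist_le (e u) (e v))

lemma IsIndepF.map_iso (e : G ≃g H) {I : Finset V} (hI : IsIndepF G I) :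
    IsIndepF H (I.map e.toEquiv.toEmbedding) := by
  intro u hu w hw huw
  rw [mem_map_equiv] at hu hw
  exact hI _ hu _ hw (e.symm.map_adj_iff.mpr huw)

variable [Fintype V] [Fintype W]

lemma TotalCoIndep.map_iso (e : G ≃g H) {D : Finset V} (hD : TotalCoIndep G D) :
    TotalCoIndep H (D.map e.toEquiv.toEmbedding) := by
  obtain ⟨hdom, ⟨z, hz⟩, hind⟩ := hD
  refine ⟨fun v => ?_, ⟨e z, ?_⟩, fun u hu w hw huw => ?_⟩
  · obtain ⟨u, hu, hvu⟩ := hdom (e.symm v)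
    refine ⟨e u, mem_map_of_mem e.toEquiv.toEmbedding hu, ?_⟩
    simpa using e.map_adj_iff.mpr hvu
  · exact mem_compl.2 fun h => mem_compl.1 hz ((mem_map' e.toEquiv.toEmbedding).1 h)
  · rw [mem_compl, mem_map_equiv, ← mem_compl] at hu hw
    exact hind _ hu _ hw (e.symm.map_adj_iff.mpr huw)

lemma gammaTcoi_congr (e : G ≃g H) : gammaTcoi G = gammaTcoi H := by
  unfold gammaTcoi
  congr 1
  ext k
  constructor
  · rintro ⟨D, hD, rfl⟩
    exact ⟨_, hD.map_iso e, card_map _⟩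
  · rintro ⟨D, hD, rfl⟩
    exact ⟨_, hD.map_iso e.symm, card_map _⟩

lemma indepNum_congr (e : G ≃g H) : indepNum G = indepNum H := by
  unfold indepNum
  congr 1
  ext k
  constructor
  · rintro ⟨I, hI, rfl⟩
    exact ⟨_, hI.map_iso e, card_map _⟩
  · rintro ⟨I, hI, rfl⟩
    exact ⟨_, hI.map_iso e.symm, card_map _⟩

lemma card_leaves_congr (e : G ≃g H) : #(leaves G) = #(leaves H) :=
  card_equiv e.toEquiv fun v => by
    rw [leaves, leaves, mem_filter, mem_filter]
    simp only [mem_univ, true_and, IsLeaf]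
    exact e.toEquiv.existsUnique_congr fun u => e.map_adj_iff.symm

end Invariance

section Extremal

variable {V : Type*} {G : SimpleGraph V}

lemma IsIndepF.card_le_of_cliqueCover {κ : Type*} [Fintype κ] (c : V → κ)
    (hc : ∀ u w, c u = c w → u ≠ w → G.Adj u w) {I : Finset V} (hI : IsIndepF G I) :
    #I ≤ Fintype.card κ :=
  card_le_card_of_injOn c (fun _ _ => mem_coe.2 (mem_univ _)) fun u hu w hw huw =>
    by_contra fun hne => hI u hu w hw (hc u w huw hne)

lemma not_isLeaf_of_adj_of_adj {v a b : V} (ha : G.Adj v a) (hb : G.Adj v b) (hab : a ≠ b) :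
    ¬ IsLeaf G v := fun ⟨_, _, huniq⟩ => hab ((huniq a ha).trans (huniq b hb).symm)

variable [Fintype V]

lemma gammaTcoi_eq_card {D : Finset V} (hD : TotalCoIndep G D)
    (hmin : ∀ D', TotalCoIndep G D' → #D ≤ #D') : gammaTcoi G = #D := by
  refine le_antisymm (Nat.sInf_le ⟨D, hD, rfl⟩) (le_csInf ⟨_, D, hD, rfl⟩ ?_)
  rintro _ ⟨D', hD', rfl⟩
  exact hmin D' hD'

lemma indepNum_eq_card {I : Finset V} (hI : IsIndepF G I)
    (hmax : ∀ J, IsIndepF G J → #J ≤ #I) : indepNum G = #I := by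
  have hbdd : ∀ k ∈ {k | ∃ J, IsIndepF G J ∧ #J = k}, k ≤ #I := by
    rintro _ ⟨J, hJ, rfl⟩
    exact hmax J hJ
  exact le_antisymm (csSup_le ⟨_, I, hI, rfl⟩ hbdd) (le_csSup ⟨_, hbdd⟩ ⟨I, hI, rfl⟩)

lemma totalCoIndep_of {D : Finset V} (hdom : ∀ v, ∃ u ∈ D, G.Adj v u) {z : V} (hz : z ∉ D)
    (hind : ∀ u w, u ∉ D → w ∉ D → ¬ G.Adj u w) : TotalCoIndep G D :=
  ⟨hdom, ⟨z, mem_compl.2 hz⟩, fun u hu w hw => hind u w (mem_compl.1 hu) (mem_compl.1 hw)⟩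

lemma TotalCoIndep.mem_of_forall_adj_eq {D : Finset V} (hD : TotalCoIndep G D) {v u : V}
    (hv : ∀ w, G.Adj v w → w = u) : u ∈ D := by
  obtain ⟨w, hw, hvw⟩ := hD.1 v
  exact hv w hvw ▸ hw

end Extremal

section RootedByRank

variable {V : Type*} {G : SimpleGraph V} {f : V → ℕ}

lemma le_add_dist_of_adj_le (hf : ∀ u v, G.Adj u v → f v ≤ f u + 1) {x y : V}
    (h : G.Reachable x y) : f y ≤ f x + G.dist x y := by
  obtain ⟨w, hw⟩ := h.exists_walk_length_eq_dist
  rw [← hw]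
  clear hw h
  induction w with
  | nil => simp
  | cons hadj w ih => have := hf _ _ hadj; rw [SimpleGraph.Walk.length_cons]; omega

variable {r : V → V → Prop}

lemma isAcyclic_of_rank_of_unique_parent (hG : ∀ u v, G.Adj u v → r u v ∨ r v u)
    (hf : ∀ u v, r u v → f v = f u + 1) (huniq : ∀ u u' v, r u v → r u' v → u = u') :
    G.IsAcyclic := by
  classical
  -- a vertex of maximal rank on a cycle would have both of its cycle neighbours as parents
  intro v c hc
  obtain ⟨w, hw, hmax⟩ := c.support.toFinset.exists_max_image f ⟨v, by simp⟩
  rw [List.mem_toFinset] at hw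
  set c' := c.rotate w hw
  have hc' : c'.IsCycle := hc.rotate hw
  have hparent : ∀ i, G.Adj w (c'.getVert i) → r (c'.getVert i) w := by
    intro i hadj
    refine (hG _ _ hadj).resolve_left fun hr => ?_
    have hi : c'.getVert i ∈ c.support :=
      (c.mem_support_rotate_iff w hw).1 (c'.getVert_mem_support i)
    have := hmax _ (List.mem_toFinset.2 hi)
    have := hf _ _ hr
    omega
  exact hc'.snd_ne_penultimate <| huniq _ _ _ (hparent 1 (c'.adj_snd hc'.not_nil))
    (hparent _ (c'.adj_penultimate hc'.not_nil).symm)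

lemma reachable_of_rank_of_parent (hr : ∀ u v, r u v → G.Adj u v)
    (hf : ∀ u v, r u v → f v = f u + 1) {root : V}
    (hparent : ∀ v, v ≠ root → ∃ u, r u v) (v : V) : G.Reachable root v := by
  induction hv : f v using Nat.strong_induction_on generalizing v with
  | _ n ih =>
    by_cases hroot : v = root
    · exact hroot ▸ SimpleGraph.Reachable.refl _
    · obtain ⟨u, huv⟩ := hparent v hroot
      exact (ih (f u) (by have := hf _ _ huv; omega) u rfl).trans (hr _ _ huv).reachable

end RootedByRank

namespace GapTree

inductive Leg | X | S | L
  deriving DecidableEq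

inductive Link | P | Q | E | F | U
  deriving DecidableEq

instance : Fintype Leg where
  elems := {.X, .S, .L}
  complete x := by cases x <;> decide

instance : Fintype Link where
  elems := {.P, .Q, .E, .F, .U}
  complete x := by cases x <;> decide

abbrev Vtx (p q : ℕ) := Unit ⊕ (Fin (p + 2) × Leg) ⊕ (Fin (q + 1) × Link)

variable {p q : ℕ}

abbrev center : Vtx p q := .inl ()
abbrev leg (i : Fin (p + 2)) (t : Leg) : Vtx p q := .inr (.inl (i, t))
abbrev link (j : Fin (q + 1)) (t : Link) : Vtx p q := .inr (.inr (j, t))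

/-- `Edge u v`: `u` is the parent of `v`. The tree consists of `p + 2` paths
`center - X - S - L` and a chain `center - P₀`, `Uⱼ - Pⱼ₊₁` of `q + 1` gadgets
`Pⱼ - Eⱼ, Pⱼ - Qⱼ, Qⱼ - Fⱼ, Qⱼ - Uⱼ`. The chain indices are constrained by equations rather than
written as `0` and `j + 1`, so that `cases` can invert an edge. -/
inductive Edge : Vtx p q → Vtx p q → Prop
  | cx (i) : Edge center (leg i .X)
  | xs (i) : Edge (leg i .X) (leg i .S)
  | sl (i) : Edge (leg i .S) (leg i .L)
  | cp (j : Fin (q + 1)) (h : (j : ℕ) = 0) : Edge center (link j .P)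
  | up (j k : Fin (q + 1)) (h : (j : ℕ) + 1 = k) : Edge (link j .U) (link k .P)
  | pq (j) : Edge (link j .P) (link j .Q)
  | pe (j) : Edge (link j .P) (link j .E)
  | qf (j) : Edge (link j .Q) (link j .F)
  | qu (j) : Edge (link j .Q) (link j .U)

def depth : Vtx p q → ℕ
  | .inl _ => 0
  | .inr (.inl (_, .X)) => 1
  | .inr (.inl (_, .S)) => 2
  | .inr (.inl (_, .L)) => 3
  | .inr (.inr (j, .P)) => 3 * j + 1
  | .inr (.inr (j, .Q)) => 3 * j + 2
  | .inr (.inr (j, .E)) => 3 * j + 2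
  | .inr (.inr (j, .F)) => 3 * j + 3
  | .inr (.inr (j, .U)) => 3 * j + 3

lemma Edge.depth_eq {u v : Vtx p q} (h : Edge u v) : depth v = depth u + 1 := by
  cases h <;> simp only [depth] <;> omega

lemma Edge.parent_unique {u u' v : Vtx p q} (h : Edge u v) (h' : Edge u' v) : u = u' := by
  cases h <;> cases h' <;> first | rfl | omega | (congr; ext; omega)

lemma exists_edge_of_ne_center {v : Vtx p q} (hv : v ≠ center) : ∃ u, Edge u v := by
  rcases v with _ | ⟨i, _ | _ | _⟩ | ⟨j, _ | _ | _ | _ | _⟩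
  · exact absurd rfl hv
  · exact ⟨_, .cx i⟩
  · exact ⟨_, .xs i⟩
  · exact ⟨_, .sl i⟩
  · obtain ⟨_ | k, hk⟩ := j
    · exact ⟨_, .cp _ rfl⟩
    · exact ⟨_, .up ⟨k, by omega⟩ _ rfl⟩
  · exact ⟨_, .pq j⟩
  · exact ⟨_, .pe j⟩
  · exact ⟨_, .qf j⟩
  · exact ⟨_, .qu j⟩

variable (p q) in
def tree : SimpleGraph (Vtx p q) := SimpleGraph.fromRel Edge

lemma tree_adj {u v : Vtx p q} : (tree p q).Adj u v ↔ Edge u v ∨ Edge v u := by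
  refine ⟨fun h => h.2, fun h => ⟨fun huv => ?_, h⟩⟩
  subst huv
  rcases h with h | h <;> have := h.depth_eq <;> omega

lemma adj_of_edge {u v : Vtx p q} (h : Edge u v) : (tree p q).Adj u v :=
  tree_adj.2 (.inl h)

lemma isTree_tree : (tree p q).IsTree := by
  have hreach := reachable_of_rank_of_parent (G := tree p q) (fun _ _ => adj_of_edge)
    (fun _ _ => Edge.depth_eq) fun _ => exists_edge_of_ne_center
  have hconn : (tree p q).Connected :=
    (SimpleGraph.connected_iff _).2 ⟨fun u v => (hreach u).symm.trans (hreach v), ⟨center⟩⟩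
  exact ⟨hconn, isAcyclic_of_rank_of_unique_parent (fun _ _ => tree_adj.1)
    (fun _ _ => Edge.depth_eq) fun _ _ _ => Edge.parent_unique⟩

lemma three_le_dist : 3 ≤ (tree p q).dist center (leg 0 .L) := by
  have hdepth : ∀ u v, (tree p q).Adj u v → depth v ≤ depth u + 1 := fun u v h => by
    rcases tree_adj.1 h with h | h <;> have := h.depth_eq <;> omega
  simpa [depth] using
    le_add_dist_of_adj_le hdepth (isTree_tree.connected.preconnected center (leg 0 .L))

lemma card_vtx : Fintype.card (Vtx p q) = 3 * p + 5 * q + 12 := by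
  simp only [Fintype.card_sum, Fintype.card_prod, Fintype.card_unit, Fintype.card_fin]
  have hLeg : Fintype.card Leg = 3 := rfl
  have hLink : Fintype.card Link = 5 := rfl
  rw [hLeg, hLink]
  ring

lemma eq_of_adj_leg_L {i : Fin (p + 2)} {u : Vtx p q} (h : (tree p q).Adj (leg i .L) u) :
    u = leg i .S := by
  rcases tree_adj.1 h with h | h <;> cases h
  rfl

lemma eq_of_adj_leg_S {i : Fin (p + 2)} {u : Vtx p q} (h : (tree p q).Adj (leg i .S) u) :
    u = leg i .X ∨ u = leg i .L := by
  rcases tree_adj.1 h with h | h <;> cases h <;> simp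

lemma eq_of_adj_link_E {j : Fin (q + 1)} {u : Vtx p q} (h : (tree p q).Adj (link j .E) u) :
    u = link j .P := by
  rcases tree_adj.1 h with h | h <;> cases h
  rfl

lemma eq_of_adj_link_F {j : Fin (q + 1)} {u : Vtx p q} (h : (tree p q).Adj (link j .F) u) :
    u = link j .Q := by
  rcases tree_adj.1 h with h | h <;> cases h
  rfl

lemma eq_of_adj_link_U {j : Fin (q + 1)} {u : Vtx p q} (h : (tree p q).Adj (link j .U) u) :
    u = link j .Q ∨ ∃ k : Fin (q + 1), (j : ℕ) + 1 = k ∧ u = link k .P := by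
  rcases tree_adj.1 h with h | h <;> cases h
  · exact .inr ⟨_, by assumption, rfl⟩
  · exact .inl rfl

abbrev DomIdx (p q : ℕ) := (Fin (p + 2) ⊕ Fin (p + 2)) ⊕ (Fin (q + 1) ⊕ Fin (q + 1))

def domVertex : DomIdx p q → Vtx p q
  | .inl (.inl i) => leg i .X
  | .inl (.inr i) => leg i .S
  | .inr (.inl j) => link j .P
  | .inr (.inr j) => link j .Q

lemma domVertex_injective : Function.Injective (domVertex (p := p) (q := q)) := by
  rintro ((a | a) | (a | a)) ((b | b) | (b | b)) h <;> simp_all [domVertex]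

variable (p q) in
def domSet : Finset (Vtx p q) := univ.map ⟨domVertex, domVertex_injective⟩

lemma domVertex_mem_domSet (a : DomIdx p q) : domVertex a ∈ domSet p q :=
  mem_map_of_mem _ (mem_univ a)

lemma center_notMem_domSet : center ∉ domSet p q := by
  simp only [domSet, mem_map, mem_univ, true_and, Function.Embedding.coeFn_mk, not_exists]
  rintro ((a | a) | (a | a)) <;> simp [domVertex]

lemma edge_meets_domSet {u v : Vtx p q} (h : Edge u v) : u ∈ domSet p q ∨ v ∈ domSet p q := by
  cases h with
  | cx i => exact .inr (domVertex_mem_domSet (.inl (.inl i)))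
  | xs i => exact .inl (domVertex_mem_domSet (.inl (.inl i)))
  | sl i => exact .inl (domVertex_mem_domSet (.inl (.inr i)))
  | cp j => exact .inr (domVertex_mem_domSet (.inr (.inl j)))
  | up j k => exact .inr (domVertex_mem_domSet (.inr (.inl k)))
  | pq j | pe j => exact .inl (domVertex_mem_domSet (.inr (.inl j)))
  | qf j | qu j => exact .inl (domVertex_mem_domSet (.inr (.inr j)))

lemma totalCoIndep_domSet : TotalCoIndep (tree p q) (domSet p q) := by
  refine totalCoIndep_of (fun v => ?_) center_notMem_domSet fun u w hu hw huw => ?_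
  · rcases v with _ | ⟨i, _ | _ | _⟩ | ⟨j, _ | _ | _ | _ | _⟩
    · exact ⟨_, domVertex_mem_domSet (.inl (.inl 0)), adj_of_edge (.cx 0)⟩
    · exact ⟨_, domVertex_mem_domSet (.inl (.inr i)), adj_of_edge (.xs i)⟩
    · exact ⟨_, domVertex_mem_domSet (.inl (.inl i)), (adj_of_edge (.xs i)).symm⟩
    · exact ⟨_, domVertex_mem_domSet (.inl (.inr i)), (adj_of_edge (.sl i)).symm⟩
    · exact ⟨_, domVertex_mem_domSet (.inr (.inr j)), adj_of_edge (.pq j)⟩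
    · exact ⟨_, domVertex_mem_domSet (.inr (.inl j)), (adj_of_edge (.pq j)).symm⟩
    · exact ⟨_, domVertex_mem_domSet (.inr (.inl j)), (adj_of_edge (.pe j)).symm⟩
    · exact ⟨_, domVertex_mem_domSet (.inr (.inr j)), (adj_of_edge (.qf j)).symm⟩
    · exact ⟨_, domVertex_mem_domSet (.inr (.inr j)), (adj_of_edge (.qu j)).symm⟩
  · rcases tree_adj.1 huw with h | h <;> rcases edge_meets_domSet h with h' | h' <;> contradiction

lemma card_domIdx_le_card {D : Finset (Vtx p q)} (hD : TotalCoIndep (tree p q) D) :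
    Fintype.card (DomIdx p q) ≤ #D := by
  have hS (i) : leg i .S ∈ D := hD.mem_of_forall_adj_eq fun _ => eq_of_adj_leg_L
  have hP (j) : link j .P ∈ D := hD.mem_of_forall_adj_eq fun _ => eq_of_adj_link_E
  have hQ (j) : link j .Q ∈ D := hD.mem_of_forall_adj_eq fun _ => eq_of_adj_link_F
  have hXL (i) : leg i .X ∈ D ∨ leg i .L ∈ D := by
    obtain ⟨u, hu, hSu⟩ := hD.1 (leg i .S)
    rcases eq_of_adj_leg_S hSu with rfl | rfl <;> simp [hu]
  let φ : DomIdx p q → Vtx p q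
    | .inl (.inl i) => if leg i .X ∈ D then leg i .X else leg i .L
    | .inl (.inr i) => leg i .S
    | .inr (.inl j) => link j .P
    | .inr (.inr j) => link j .Q
  have hφD : ∀ a, φ a ∈ D := by
    rintro ((i | i) | (j | j))
    · by_cases hX : leg i .X ∈ D <;> simp only [φ, hX, if_true, if_false]
      exact (hXL i).resolve_left hX
    exacts [hS i, hP j, hQ j]
  have hφ : Function.Injective φ := by
    rintro ((a | a) | (a | a)) ((b | b) | (b | b)) h <;> simp only [φ] at h <;>
      (try split_ifs at h) <;> simp_all
  simpa using card_le_card_of_injOn (s := univ) φ (fun a _ => hφD a) hφ.injOn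

lemma gammaTcoi_tree : gammaTcoi (tree p q) = 2 * p + 2 * q + 6 := by
  have hcard : #(domSet p q) = Fintype.card (DomIdx p q) := by simp [domSet]
  rw [gammaTcoi_eq_card totalCoIndep_domSet fun D hD => hcard ▸ card_domIdx_le_card hD, hcard]
  simp only [Fintype.card_sum, Fintype.card_fin]
  ring

abbrev IndIdx (p q : ℕ) := (Fin (p + 2) × Bool) ⊕ (Fin (q + 1) × Fin 3)

-- A cover by edges and single vertices with one class per vertex of `indSet`.
def cliqueClass : Vtx p q → IndIdx p q
  | .inl _ => .inl (0, false)
  | .inr (.inl (i, .X)) => .inl (i, false)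
  | .inr (.inl (i, .S)) => if i = 0 then .inl (0, true) else .inl (i, false)
  | .inr (.inl (i, .L)) => .inl (i, true)
  | .inr (.inr (j, .P)) | .inr (.inr (j, .E)) => .inr (j, 0)
  | .inr (.inr (j, .Q)) | .inr (.inr (j, .F)) => .inr (j, 1)
  | .inr (.inr (j, .U)) => .inr (j, 2)

lemma adj_of_cliqueClass_eq {u w : Vtx p q} (h : cliqueClass u = cliqueClass w) (hne : u ≠ w) :
    (tree p q).Adj u w := by
  rw [tree_adj]
  rcases u with _ | ⟨i, _ | _ | _⟩ | ⟨j, _ | _ | _ | _ | _⟩ <;>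
    rcases w with _ | ⟨i', _ | _ | _⟩ | ⟨j', _ | _ | _ | _ | _⟩ <;>
    simp only [cliqueClass] at h <;> (try split_ifs at h) <;> simp_all
  all_goals first | (left; constructor) | (right; constructor)

def indVertex : IndIdx p q → Vtx p q
  | .inl (i, false) => leg i .X
  | .inl (i, true) => leg i .L
  | .inr (j, 0) => link j .E
  | .inr (j, 1) => link j .F
  | .inr (j, 2) => link j .U

lemma cliqueClass_indVertex : Function.LeftInverse cliqueClass (indVertex (p := p) (q := q)) := by
  rintro (⟨i, _ | _⟩ | ⟨j, k⟩)
  · rfl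
  · rfl
  · fin_cases k <;> rfl

variable (p q) in
def indSet : Finset (Vtx p q) :=
  univ.map ⟨indVertex, cliqueClass_indVertex.injective⟩

lemma mem_indSet {v : Vtx p q} : v ∈ indSet p q ↔ indVertex (cliqueClass v) = v := by
  refine ⟨fun hv => ?_, fun hv => hv ▸ mem_map_of_mem _ (mem_univ _)⟩
  obtain ⟨a, -, rfl⟩ := mem_map.1 hv
  exact congrArg indVertex (cliqueClass_indVertex a)

lemma leg_S_notMem_indSet (i : Fin (p + 2)) : leg i .S ∉ indSet p q := by
  rw [mem_indSet]
  by_cases hi : i = 0 <;> simp [cliqueClass, indVertex, hi]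

lemma isIndepF_indSet : IsIndepF (tree p q) (indSet p q) := by
  intro u hu w hw huw
  rcases tree_adj.1 huw with h | h <;> cases h
  all_goals first
    | exact leg_S_notMem_indSet _ hu | exact leg_S_notMem_indSet _ hw
    | simp [mem_indSet, cliqueClass, indVertex] at hu hw

lemma indepNum_tree : indepNum (tree p q) = 2 * p + 3 * q + 7 := by
  have hcard : #(indSet p q) = Fintype.card (IndIdx p q) := by simp [indSet]
  rw [indepNum_eq_card isIndepF_indSet fun J hJ =>
    hcard ▸ hJ.card_le_of_cliqueCover cliqueClass fun _ _ => adj_of_cliqueClass_eq, hcard]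
  simp only [Fintype.card_sum, Fintype.card_prod, Fintype.card_fin, Fintype.card_bool]
  ring

abbrev LeafIdx (p q : ℕ) := Fin (p + 2) ⊕ (Fin (q + 1) × Bool) ⊕ Unit

def leafVertex : LeafIdx p q → Vtx p q
  | .inl i => leg i .L
  | .inr (.inl (j, true)) => link j .E
  | .inr (.inl (j, false)) => link j .F
  | .inr (.inr _) => link (Fin.last q) .U

lemma leafVertex_injective : Function.Injective (leafVertex (p := p) (q := q)) := by
  rintro (a | ⟨a, _ | _⟩ | a) (b | ⟨b, _ | _⟩ | b) h <;> simp_all [leafVertex]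

lemma isLeaf_iff_mem_range (v : Vtx p q) : IsLeaf (tree p q) v ↔ v ∈ Set.range leafVertex := by
  refine ⟨fun hv => ?_, ?_⟩
  · have hnot {a b} (ha : (tree p q).Adj v a) (hb : (tree p q).Adj v b) (hab : a ≠ b) : False :=
      not_isLeaf_of_adj_of_adj ha hb hab hv
    rcases v with _ | ⟨i, _ | _ | _⟩ | ⟨j, _ | _ | _ | _ | _⟩
    · exact (hnot (adj_of_edge (.cx 0)) (adj_of_edge (.cx 1)) (by simp)).elim
    · exact (hnot (adj_of_edge (.cx i)).symm (adj_of_edge (.xs i)) (by simp)).elim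
    · exact (hnot (adj_of_edge (.xs i)).symm (adj_of_edge (.sl i)) (by simp)).elim
    · exact ⟨.inl i, rfl⟩
    · exact (hnot (adj_of_edge (.pq j)) (adj_of_edge (.pe j)) (by simp)).elim
    · exact (hnot (adj_of_edge (.pq j)).symm (adj_of_edge (.qf j)) (by simp)).elim
    · exact ⟨.inr (.inl (j, true)), rfl⟩
    · exact ⟨.inr (.inl (j, false)), rfl⟩
    · obtain rfl : j = Fin.last q := Fin.eq_last_of_not_lt fun hj =>
        hnot (adj_of_edge (.qu j)).symm (adj_of_edge (.up j ⟨j + 1, by omega⟩ rfl)) (by simp)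
      exact ⟨.inr (.inr ()), rfl⟩
  · rintro ⟨i | ⟨j, _ | _⟩ | _, rfl⟩
    · exact ⟨_, (adj_of_edge (.sl i)).symm, fun _ => eq_of_adj_leg_L⟩
    · exact ⟨_, (adj_of_edge (.qf j)).symm, fun _ => eq_of_adj_link_F⟩
    · exact ⟨_, (adj_of_edge (.pe j)).symm, fun _ => eq_of_adj_link_E⟩
    · refine ⟨_, (adj_of_edge (.qu _)).symm, fun u hu => ?_⟩
      refine (eq_of_adj_link_U hu).resolve_right ?_
      rintro ⟨k, hk, -⟩
      simp only [Fin.val_last] at hk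
      omega

lemma card_leaves_tree : #(leaves (tree p q)) = p + 2 * q + 5 := by
  have : leaves (tree p q) = univ.map ⟨leafVertex, leafVertex_injective⟩ := by
    ext v
    simp [leaves, isLeaf_iff_mem_range]
  rw [this, card_map, card_univ]
  simp only [Fintype.card_sum, Fintype.card_prod, Fintype.card_fin, Fintype.card_bool,
    Fintype.card_unique]
  ring

end GapTree

/-- For all positive integers `b` and `d` there is a tree `T` of diameter at least 3 with
`γ_{t,coi}(T) - (n - β(T)) = b` and `(n - |L(T)|) - γ_{t,coi}(T) = d`. -/
theorem stmt17 (b d : ℕ) (hb : 0 < b) (hd : 0 < d) :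
    ∃ (n : ℕ) (T : SimpleGraph (Fin n)), T.IsTree ∧ (∃ x y : Fin n, 3 ≤ T.dist x y) ∧
      gammaTcoi T - (n - indepNum T) = b ∧
      (n - (leaves T).card) - gammaTcoi T = d := by
  open GapTree in
  obtain ⟨p, rfl⟩ : ∃ p, b = p + 1 := ⟨b - 1, by omega⟩
  obtain ⟨q, rfl⟩ : ∃ q, d = q + 1 := ⟨d - 1, by omega⟩
  let e := (tree p q).overFinIso card_vtx
  refine ⟨_, _, e.isTree_iff.1 isTree_tree, ⟨e center, e (leg 0 .L), ?_⟩, ?_, ?_⟩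
  · exact (e.dist_eq _ _).symm ▸ three_le_dist
  · rw [← gammaTcoi_congr e, ← indepNum_congr e, gammaTcoi_tree, indepNum_tree]
    omega
  · rw [← gammaTcoi_congr e, ← card_leaves_congr e, gammaTcoi_tree, card_leaves_tree]
    omega
end
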